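/- Let n ≥ 1. For all permutations β₁, β₂, β₃, β₄ of {1,…,2n}, the chain functional F(β) := |β₁| + 2|γ_{n,n}⁻¹β₂| + |β₃| + |γ_{n,n}⁻¹β₃| + |β₄| + |β₁⁻¹β₂| + |β₂⁻¹β₃| + |β₃⁻¹β₄| satisfies F(β) ≥ 3(2n − 2). -/

import Mathlib

/-!
For a permutation `σ` of a finite set of size `m`, `cycleCount σ` is the number of cycles
(fixed points count as cycles) and `permLen σ = m - cycleCount σ` (the minimal number of
transpositions needed to write `σ`).  We model `{1,…,2n}` as `Fin n ⊕ Fin n`, the first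
summand being `{1,…,n}` and the second `{n+1,…,2n}`.  `gammaNN n` is the product of the
two `n`-cycles `(1,2,…,n)` and `(n+1,…,2n)`.
-/

/-- The number of cycles of a permutation, where fixed points count as cycles. -/
noncomputable def cycleCount {α : Type*} [Fintype α] [DecidableEq α]
    (σ : Equiv.Perm α) : ℕ :=
  Multiset.card σ.cycleType + (Fintype.card α - σ.support.card)

/-- `|σ| = m - #(σ)`, the minimal number of transpositions whose product is `σ`. -/
noncomputable def permLen {α : Type*} [Fintype α] [DecidableEq α]
    (σ : Equiv.Perm α) : ℕ :=
  Fintype.card α - cycleCount σ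

/-- `γ_{n,n}`: the product of the two `n`-cycles `(1,…,n)` and `(n+1,…,2n)`. -/
def gammaNN (n : ℕ) : Equiv.Perm (Fin n ⊕ Fin n) :=
  Equiv.sumCongr (finRotate n) (finRotate n)

/-- A permutation of `{1,…,2n}` is connected if some cycle of it contains both an
element of `{1,…,n}` and an element of `{n+1,…,2n}`. -/
def IsConnectedPerm {n : ℕ} (β : Equiv.Perm (Fin n ⊕ Fin n)) : Prop :=
  ∃ a b : Fin n, β.SameCycle (Sum.inl a) (Sum.inr b)

/-- The chain functional
`F(β) = |β₁| + 2|γ_{n,n}⁻¹β₂| + |β₃| + |γ_{n,n}⁻¹β₃| + |β₄| + |β₁⁻¹β₂| + |β₂⁻¹β₃| + |β₃⁻¹β₄|`. -/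
noncomputable def chainF {n : ℕ} (b₁ b₂ b₃ b₄ : Equiv.Perm (Fin n ⊕ Fin n)) : ℕ :=
  permLen b₁ + 2 * permLen ((gammaNN n)⁻¹ * b₂) + permLen b₃
    + permLen ((gammaNN n)⁻¹ * b₃) + permLen b₄
    + permLen (b₁⁻¹ * b₂) + permLen (b₂⁻¹ * b₃) + permLen (b₃⁻¹ * b₄)

/-!
Over a field, the kernel of `f ↦ f ∘ σ - f` consists of the functions constant on the cycles
of `σ`, so its rank is `|σ|`. Rank is subadditive, hence so is `|·|`, and
`d(σ, τ) = |σ⁻¹τ|` is a metric on permutations. The functional `F` is the total length of the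
three paths `1, β₁, β₂, γ`, `1, β₃, γ` and `1, β₄, β₃, β₂, γ` from `1` to `γ = γ_{n,n}`, each
of length at least `d(1, γ) = |γ| = 2n - 2`, as `γ` has two cycles.
-/

open Equiv Equiv.Perm Module LinearMap

theorem Equiv.Perm.SameCycle.apply_eq_of_invariant {α β : Type*} [Finite α] {σ : Perm α}
    {f : α → β} (hf : ∀ a, f (σ a) = f a) {a b : α} (h : σ.SameCycle a b) : f a = f b := by
  obtain ⟨k, rfl⟩ := h.exists_nat_pow_eq
  clear h
  induction k with
  | zero => rfl
  | succ k ih => rw [ih, pow_succ', mul_apply, hf]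

theorem Equiv.Perm.sameCycle_of_apply_eq_add_one {β : Type*} {g : Perm β} {m : ℕ}
    (ι : Fin (m + 1) → β) (hg : ∀ i, g (ι i) = ι (i + 1)) (a : Fin (m + 1)) :
    g.SameCycle (ι 0) (ι a) := by
  induction a using Fin.induction with
  | zero => rfl
  | succ i ih => rwa [← Fin.coeSucc_eq_succ, ← hg, sameCycle_apply_right]

theorem card_quotient_sameCycle_eq_cycleCount {α : Type*} [Fintype α] [DecidableEq α]
    (σ : Perm α) :
    Nat.card (Quotient (SameCycle.setoid σ)) = cycleCount σ := by
  obtain ⟨b⟩ := Perm.Basis.nonempty σ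
  let φ : (σ.supportᶜ : Finset α) ⊕ σ.cycleFactorsFinset → Quotient (SameCycle.setoid σ) :=
    Sum.elim (fun a => Quotient.mk _ a) (fun c => Quotient.mk _ (b c))
  have hφ : Function.Bijective φ := by
    have hb : ∀ c, b c ∈ σ.support := fun c =>
      mem_cycleFactorsFinset_support_le c.prop (b.mem_support_self c)
    have hfix : ∀ {x y}, x ∈ σ.supportᶜ → σ.SameCycle x y → x = y := fun hx h =>
      h.eq_of_left (notMem_support.1 (Finset.mem_compl.1 hx))
    refine ⟨?_, ?_⟩
    · rintro (⟨x, hx⟩ | c) (⟨y, hy⟩ | d) h <;>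
        simp only [φ, Sum.elim_inl, Sum.elim_inr, Quotient.eq] at h
      · obtain rfl := hfix hx h
        rfl
      · exact absurd (hb d) (hfix hx h ▸ Finset.mem_compl.1 hx)
      · exact absurd (hb c) (hfix hy h.symm ▸ Finset.mem_compl.1 hy)
      · exact congrArg Sum.inr <| Subtype.ext <|
          (b.cycleOf_eq c).symm.trans (h.cycleOf_eq.trans (b.cycleOf_eq d))
    · rintro ⟨x⟩
      by_cases hx : x ∈ σ.support
      · let c : σ.cycleFactorsFinset := ⟨σ.cycleOf x, cycleOf_mem_cycleFactorsFinset_iff.2 hx⟩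
        exact ⟨.inr c, Quotient.sound (mem_support_cycleOf_iff.1 (b.mem_support_self c)).1.symm⟩
      · exact ⟨.inl ⟨x, Finset.mem_compl.2 hx⟩, rfl⟩
  rw [← Nat.card_eq_of_bijective φ hφ, Nat.card_sum, cycleCount, cycleType_def, Multiset.card_map,
    Nat.card_eq_fintype_card, Nat.card_eq_fintype_card, Fintype.card_coe, Fintype.card_coe,
    Finset.card_compl, add_comm]
  rfl

section Coboundary

variable (K : Type*) [Field K] {α : Type*}

def permCoboundary (σ : Perm α) : (α → K) →ₗ[K] (α → K) :=
  funLeft K K σ - LinearMap.id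

theorem permCoboundary_mul (σ τ : Perm α) :
    permCoboundary K (σ * τ) = funLeft K K τ ∘ₗ permCoboundary K σ + permCoboundary K τ := by
  ext f a
  simp [permCoboundary, funLeft_apply]

theorem ker_permCoboundary [Finite α] (σ : Perm α) :
    ker (permCoboundary K σ) = range (funLeft K K (Quotient.mk (SameCycle.setoid σ))) := by
  ext f
  constructor
  · intro hf
    have hinv : ∀ a, f (σ a) = f a := fun a => sub_eq_zero.1 (congrFun hf a)
    exact ⟨Quotient.lift f fun _ _ h => h.apply_eq_of_invariant hinv, rfl⟩
  · rintro ⟨g, rfl⟩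
    funext a
    exact sub_eq_zero.2 (congrArg g (Quotient.sound (sameCycle_apply_left.2 SameCycle.rfl)))

theorem finrank_range_permCoboundary [Fintype α] [DecidableEq α] (σ : Perm α) :
    finrank K (range (permCoboundary K σ)) = permLen σ := by
  classical
  have hker : finrank K (ker (permCoboundary K σ)) = cycleCount σ := by
    rw [ker_permCoboundary, finrank_range_of_inj (funLeft_injective_of_surjective _ _ _
      Quotient.mk_surjective), finrank_fintype_fun_eq_card, ← Nat.card_eq_fintype_card,
      card_quotient_sameCycle_eq_cycleCount]
  have := finrank_range_add_finrank_ker (permCoboundary K σ)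
  rw [finrank_fintype_fun_eq_card] at this
  unfold permLen
  omega

end Coboundary

section CayleyDist

variable {α : Type*} [Fintype α] [DecidableEq α]

theorem permLen_mul_le (σ τ : Perm α) : permLen (σ * τ) ≤ permLen σ + permLen τ := by
  rw [← finrank_range_permCoboundary ℚ, ← finrank_range_permCoboundary ℚ σ,
    ← finrank_range_permCoboundary ℚ τ, permCoboundary_mul]
  calc _ ≤ finrank ℚ (range (funLeft ℚ ℚ τ ∘ₗ permCoboundary ℚ σ) ⊔
        range (permCoboundary ℚ τ) : Submodule ℚ (α → ℚ)) :=
        Submodule.finrank_mono (range_add_le _ _)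
    _ ≤ _ := Submodule.finrank_add_le_finrank_add_finrank _ _
    _ ≤ _ := by
        rw [range_comp]
        gcongr
        exact Submodule.finrank_map_le _ _

theorem permLen_inv (σ : Perm α) : permLen σ⁻¹ = permLen σ := by
  simp [permLen, cycleCount]

noncomputable def cayleyDist (σ τ : Perm α) : ℕ :=
  permLen (σ⁻¹ * τ)

theorem cayleyDist_comm (σ τ : Perm α) : cayleyDist σ τ = cayleyDist τ σ := by
  rw [cayleyDist, cayleyDist, ← permLen_inv, mul_inv_rev, inv_inv]

theorem cayleyDist_triangle (σ τ ρ : Perm α) :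
    cayleyDist σ ρ ≤ cayleyDist σ τ + cayleyDist τ ρ := by
  simpa [cayleyDist, mul_assoc] using permLen_mul_le (σ⁻¹ * τ) (τ⁻¹ * ρ)

theorem cayleyDist_one_left (σ : Perm α) : cayleyDist 1 σ = permLen σ := by
  simp [cayleyDist]

end CayleyDist

theorem two_mul_sub_two_le_permLen_gammaNN (n : ℕ) : 2 * n - 2 ≤ permLen (gammaNN n) := by
  obtain _ | m := n
  · simp
  have hcard : Nat.card (Quotient (SameCycle.setoid (gammaNN (m + 1)))) ≤ 2 := by
    let rep : Bool → Quotient (SameCycle.setoid (gammaNN (m + 1))) :=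
      fun i => Quotient.mk _ (if i then .inr 0 else .inl 0)
    refine (Nat.card_le_card_of_surjective rep ?_).trans (by simp)
    rintro ⟨a | a⟩
    · exact ⟨false, Quotient.sound <| sameCycle_of_apply_eq_add_one Sum.inl
        (fun i => congrArg Sum.inl (finRotate_apply i)) a⟩
    · exact ⟨true, Quotient.sound <| sameCycle_of_apply_eq_add_one Sum.inr
        (fun i => congrArg Sum.inr (finRotate_apply i)) a⟩
  rw [card_quotient_sameCycle_eq_cycleCount] at hcard
  simp only [permLen, Fintype.card_sum, Fintype.card_fin]
  omega

theorem chainF_ge_general (n : ℕ) (b₁ b₂ b₃ b₄ : Equiv.Perm (Fin n ⊕ Fin n)) :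
    3 * (2 * n - 2) ≤ chainF b₁ b₂ b₃ b₄ := by
  unfold chainF
  set γ := gammaNN n
  have hγ : 2 * n - 2 ≤ permLen γ := two_mul_sub_two_le_permLen_gammaNN n
  have h₁ : cayleyDist 1 γ ≤ cayleyDist 1 b₁ + cayleyDist b₁ b₂ + cayleyDist γ b₂ := by
    linarith [cayleyDist_triangle 1 b₁ b₂, cayleyDist_triangle 1 b₂ γ, cayleyDist_comm b₂ γ]
  have h₂ : cayleyDist 1 γ ≤ cayleyDist 1 b₃ + cayleyDist γ b₃ := by
    linarith [cayleyDist_triangle 1 b₃ γ, cayleyDist_comm b₃ γ]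
  have h₃ : cayleyDist 1 γ ≤
      cayleyDist 1 b₄ + cayleyDist b₃ b₄ + cayleyDist b₂ b₃ + cayleyDist γ b₂ := by
    linarith [cayleyDist_triangle 1 b₄ b₃, cayleyDist_triangle 1 b₃ b₂,
      cayleyDist_triangle 1 b₂ γ, cayleyDist_comm b₄ b₃, cayleyDist_comm b₃ b₂,
      cayleyDist_comm b₂ γ]
  simp only [cayleyDist_one_left] at h₁ h₂ h₃
  unfold cayleyDist at h₁ h₂ h₃
  omega

theorem chainF_ge (n : ℕ) (hn : 1 ≤ n) (b₁ b₂ b₃ b₄ : Equiv.Perm (Fin n ⊕ Fin n)) :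
    3 * (2 * n - 2) ≤ chainF b₁ b₂ b₃ b₄ :=
  chainF_ge_general n b₁ b₂ b₃ b₄
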